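/- arXiv:1308.5312 — 4 statements merged into one kernel-verified Lean document; each statement's English description precedes it below -/
import Mathlib

section
/- For all real x, Φ*^(a)(x) ≤ Φ*^(b)(x) ≤ √2 · Φ*^(a)(x), where Φ*^(a)(x) = (1+|x|)log(1+|x|) − |x| and Φ*^(b)(x) = |x|·arcsinh|x| − √(1+x²) + 1. -/
/-- Young conjugate of `e^|y| - 1 - |y|`. -/
noncomputable def PhiStarA (x : ℝ) : ℝ := (1 + |x|) * Real.log (1 + |x|) - |x|

/-- Young conjugate of `cosh y - 1`. -/
noncomputable def PhiStarB (x : ℝ) : ℝ := |x| * Real.arsinh |x| - Real.sqrt (1 + x ^ 2) + 1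

/-!
Both functions vanish at `0`, and on `[0, ∞)` their derivatives are `log (1 + t)` and
`arsinh t = log (t + √(1 + t²))`. So it suffices to compare the derivatives,
`log (1 + t) ≤ arsinh t ≤ √2 · log (1 + t)`. The first holds because `1 + t ≤ t + √(1 + t²)`;
the second is again a comparison of derivatives, `1 / √(1 + t²) ≤ √2 / (1 + t)`, which is
`(1 + t)² ≤ 2 (1 + t²)`.
-/

open Real Set

theorem le_of_hasDerivAt_le {f g f' g' : ℝ → ℝ} {a b : ℝ} (hab : a ≤ b)
    (hf : ∀ x ∈ Icc a b, HasDerivAt f (f' x) x) (hg : ∀ x ∈ Icc a b, HasDerivAt g (g' x) x)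
    (ha : f a ≤ g a) (bound : ∀ x ∈ Ico a b, f' x ≤ g' x) : f b ≤ g b :=
  image_le_of_deriv_right_le_deriv_boundary
    (fun x hx => (hf x hx).continuousAt.continuousWithinAt)
    (fun x hx => (hf x (Ico_subset_Icc_self hx)).hasDerivWithinAt) ha
    (fun x hx => (hg x hx).continuousAt.continuousWithinAt)
    (fun x hx => (hg x (Ico_subset_Icc_self hx)).hasDerivWithinAt) bound ⟨hab, le_rfl⟩

theorem hasDerivAt_log_one_add {t : ℝ} (ht : 1 + t ≠ 0) :
    HasDerivAt (fun u => log (1 + u)) (1 / (1 + t)) t := by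
  simpa using ((hasDerivAt_id t).const_add 1).log ht

theorem hasDerivAt_one_add_mul_log_one_add_sub {t : ℝ} (ht : 1 + t ≠ 0) :
    HasDerivAt (fun u => (1 + u) * log (1 + u) - u) (log (1 + t)) t := by
  refine ((((hasDerivAt_id t).const_add 1).mul (hasDerivAt_log_one_add ht)).sub
    (hasDerivAt_id t)).congr_deriv ?_
  simp only [id_eq]
  field_simp
  ring

theorem hasDerivAt_mul_arsinh_sub_sqrt_one_add_sq (t : ℝ) :
    HasDerivAt (fun u => u * arsinh u - √(1 + u ^ 2) + 1) (arsinh t) t := by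
  have hsqrt : HasDerivAt (fun u => √(1 + u ^ 2)) (2 * t / (2 * √(1 + t ^ 2))) t := by
    simpa [mul_comm] using ((hasDerivAt_pow 2 t).const_add 1).sqrt (by positivity)
  refine ((((hasDerivAt_id t).mul (hasDerivAt_arsinh t)).sub hsqrt).add_const 1).congr_deriv ?_
  have : 0 < √(1 + t ^ 2) := sqrt_pos.2 (by positivity)
  simp only [id_eq]
  field_simp
  ring

theorem log_one_add_le_arsinh {t : ℝ} (ht : 0 ≤ t) : log (1 + t) ≤ arsinh t :=
  log_le_log (by linarith) (by linarith [one_le_sqrt.2 (by nlinarith : 1 ≤ 1 + t ^ 2)])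

theorem one_add_le_sqrt_two_mul_sqrt_one_add_sq (t : ℝ) : 1 + t ≤ √2 * √(1 + t ^ 2) := by
  rw [← sqrt_mul zero_le_two]
  exact le_sqrt_of_sq_le (by nlinarith [sq_nonneg (t - 1)])

theorem arsinh_le_sqrt_two_mul_log_one_add {t : ℝ} (ht : 0 ≤ t) :
    arsinh t ≤ √2 * log (1 + t) := by
  refine le_of_hasDerivAt_le (f := arsinh) (g := fun u => √2 * log (1 + u)) ht
    (fun x _ => hasDerivAt_arsinh x)
    (fun x hx => (hasDerivAt_log_one_add (by linarith [hx.1])).const_mul _) (by simp)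
    (fun x hx => ?_)
  have h1 : 0 < 1 + x := by linarith [hx.1]
  have h2 : 0 < √(1 + x ^ 2) := sqrt_pos.2 (by positivity)
  rw [inv_eq_one_div, mul_one_div, div_le_div_iff₀ h2 h1, one_mul]
  exact one_add_le_sqrt_two_mul_sqrt_one_add_sq x

theorem phiStarA_abs (x : ℝ) : PhiStarA |x| = PhiStarA x := by
  simp [PhiStarA]

theorem phiStarB_abs (x : ℝ) : PhiStarB |x| = PhiStarB x := by
  simp [PhiStarB]

theorem phiStarA_of_nonneg {t : ℝ} (ht : 0 ≤ t) :
    PhiStarA t = (1 + t) * log (1 + t) - t := by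
  rw [PhiStarA, abs_of_nonneg ht]

theorem phiStarB_of_nonneg {t : ℝ} (ht : 0 ≤ t) :
    PhiStarB t = t * arsinh t - √(1 + t ^ 2) + 1 := by
  rw [PhiStarB, abs_of_nonneg ht]

theorem phiStarA_le_phiStarB_of_nonneg {t : ℝ} (ht : 0 ≤ t) : PhiStarA t ≤ PhiStarB t := by
  rw [phiStarA_of_nonneg ht, phiStarB_of_nonneg ht]
  exact le_of_hasDerivAt_le ht
    (fun x hx => hasDerivAt_one_add_mul_log_one_add_sub (by linarith [hx.1]))
    (fun x _ => hasDerivAt_mul_arsinh_sub_sqrt_one_add_sq x) (by simp)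
    (fun x hx => log_one_add_le_arsinh hx.1)

theorem phiStarB_le_sqrt_two_mul_phiStarA_of_nonneg {t : ℝ} (ht : 0 ≤ t) :
    PhiStarB t ≤ √2 * PhiStarA t := by
  rw [phiStarA_of_nonneg ht, phiStarB_of_nonneg ht]
  exact le_of_hasDerivAt_le (g := fun u => √2 * ((1 + u) * log (1 + u) - u)) ht
    (fun x _ => hasDerivAt_mul_arsinh_sub_sqrt_one_add_sq x)
    (fun x hx => (hasDerivAt_one_add_mul_log_one_add_sub (by linarith [hx.1])).const_mul _)
    (by simp) (fun x hx => arsinh_le_sqrt_two_mul_log_one_add hx.1)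

theorem phiStarA_le_phiStarB_le (x : ℝ) :
    PhiStarA x ≤ PhiStarB x ∧ PhiStarB x ≤ Real.sqrt 2 * PhiStarA x := by
  rw [← phiStarA_abs, ← phiStarB_abs]
  exact ⟨phiStarA_le_phiStarB_of_nonneg (abs_nonneg x),
    phiStarB_le_sqrt_two_mul_phiStarA_of_nonneg (abs_nonneg x)⟩
end

section
/- The Young function Φ*(x) = (1+|x|)log(1+|x|) − |x| satisfies the Δ₂-condition with constant a²: for every a > 1 and every real x, Φ*(a·x) ≤ a²·Φ*(x). -/
open Real Set

noncomputable def phiStar (t : ℝ) : ℝ := (1 + t) * log (1 + t) - t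

lemma PhiStarA_eq_phiStar_abs (x : ℝ) : PhiStarA x = phiStar |x| := rfl

lemma phiStar_zero : phiStar 0 = 0 := by simp [phiStar]

lemma hasDerivAt_phiStar {t : ℝ} (ht : -1 < t) : HasDerivAt phiStar (log (1 + t)) t := by
  have hpos : 1 + t ≠ 0 := by linarith
  have hlin : HasDerivAt (fun s : ℝ => 1 + s) 1 t := (hasDerivAt_id t).const_add 1
  have hlog : HasDerivAt (fun s : ℝ => log (1 + s)) (1 / (1 + t)) t := by
    simpa using hlin.log hpos
  exact ((hlin.mul hlog).sub (hasDerivAt_id t)).congr_deriv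
    (by rw [mul_one_div_cancel hpos]; ring)

lemma log_one_add_mul_le_mul_log_one_add {a s : ℝ} (ha : 1 ≤ a) (hs : 0 ≤ s) :
    log (1 + a * s) ≤ a * log (1 + s) := by
  rw [← log_rpow (by linarith)]
  exact log_le_log (by nlinarith) (one_add_mul_self_le_rpow_one_add (by linarith) ha)

lemma phiStar_mul_le {a t : ℝ} (ha : 1 ≤ a) (ht : 0 ≤ t) :
    phiStar (a * t) ≤ a ^ 2 * phiStar t := by
  set F : ℝ → ℝ := fun s => a ^ 2 * phiStar s - phiStar (a * s)
  have hF : ∀ s, 0 ≤ s → HasDerivAt F (a * (a * log (1 + s) - log (1 + a * s))) s := by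
    intro s hs
    have hscaled := (hasDerivAt_phiStar (by nlinarith : -1 < a * s)).comp s
      ((hasDerivAt_id s).const_mul a)
    exact (((hasDerivAt_phiStar (by linarith : -1 < s)).const_mul (a ^ 2)).sub
      hscaled).congr_deriv (by ring)
  have hmono : MonotoneOn F (Ici 0) := by
    refine monotoneOn_of_hasDerivWithinAt_nonneg (convex_Ici 0)
      (fun s hs => (hF s hs).continuousAt.continuousWithinAt)
      (fun s hs => (hF s (interior_subset hs)).hasDerivWithinAt) fun s hs => ?_
    have hs : 0 ≤ s := interior_subset hs
    exact mul_nonneg (by linarith)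
      (sub_nonneg.mpr (log_one_add_mul_le_mul_log_one_add ha hs))
  have hle := hmono self_mem_Ici (mem_Ici.mpr ht) ht
  simp only [F, mul_zero, phiStar_zero] at hle
  linarith

theorem phiStarA_delta_two (a : ℝ) (ha : 1 < a) (x : ℝ) :
    PhiStarA (a * x) ≤ a ^ 2 * PhiStarA x := by
  rw [PhiStarA_eq_phiStar_abs, PhiStarA_eq_phiStar_abs, abs_mul, abs_of_pos (by linarith)]
  exact phiStar_mul_le ha.le (abs_nonneg x)
end

section
/- For all x ≥ 0, (1+x)·log(1+x) − x ≤ x·log x + 1 − log(e−1), and hence Φ*(x) < x·log x + 1 (with the convention 0·log 0 = 0). -/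
/-! The map `t ↦ (1 + t) log (1 + t) - t log t - t` is concave with maximum `1 - log (e - 1)`
at `t = 1/(e - 1)`. Instead of locating that maximum by calculus, apply the Gibbs-type bound
`a log b ≤ a log a + b - a` twice, with `b` chosen as the value that makes it an equality at
`t = 1/(e - 1)`: once to `t` and `(1 + t)/e`, once to `1` and `(1 + t)(e - 1)/e`.
The right-hand sides add up to `0`. -/

open Real

theorem Real.mul_log_le_mul_log_add_sub {a b : ℝ} (ha : 0 ≤ a) (hb : 0 < b) :
    a * log b ≤ a * log a + b - a := by
  rcases ha.eq_or_lt with rfl | ha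
  · simpa using hb.le
  have hlog : log (b / a) ≤ b / a - 1 := log_le_sub_one_of_pos (div_pos hb ha)
  rw [log_div hb.ne' ha.ne'] at hlog
  have := mul_le_mul_of_nonneg_left hlog ha.le
  rw [mul_sub, mul_sub, mul_div_cancel₀ _ ha.ne', mul_one] at this
  linarith

theorem Real.one_add_mul_log_one_add_sub_le (t : ℝ) (ht : 0 ≤ t) :
    (1 + t) * log (1 + t) - t ≤ t * log t + 1 - log (exp 1 - 1) := by
  have he : 1 < exp 1 - 1 := by linarith [exp_one_gt_d9]
  have h1t : 0 < 1 + t := by linarith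
  have hprod : 0 < (1 + t) * (exp 1 - 1) := mul_pos h1t (by linarith)
  have hfirst : t * log ((1 + t) / exp 1) ≤ t * log t + (1 + t) / exp 1 - t :=
    mul_log_le_mul_log_add_sub ht (by positivity)
  have hsecond : 1 * log ((1 + t) * (exp 1 - 1) / exp 1) ≤
      1 * log 1 + (1 + t) * (exp 1 - 1) / exp 1 - 1 :=
    mul_log_le_mul_log_add_sub zero_le_one (div_pos hprod (exp_pos 1))
  rw [log_div h1t.ne' (exp_pos 1).ne', log_exp] at hfirst
  rw [log_div hprod.ne' (exp_pos 1).ne', log_mul h1t.ne' (by linarith),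
    log_exp, log_one] at hsecond
  have hsum : (1 + t) / exp 1 + (1 + t) * (exp 1 - 1) / exp 1 = 1 + t := by
    field_simp; ring
  linarith

theorem phiStar_le_xlogx (x : ℝ) (hx : 0 ≤ x) :
    (1 + x) * Real.log (1 + x) - x ≤ x * Real.log x + 1 - Real.log (Real.exp 1 - 1) ∧
    (1 + x) * Real.log (1 + x) - x < x * Real.log x + 1 := by
  have hlog_pos : 0 < log (exp 1 - 1) := log_pos (by linarith [exp_one_gt_d9])
  have hbound := one_add_mul_log_one_add_sub_le x hx
  exact ⟨hbound, by linarith⟩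
end

section
/- Let f₀⊗f₀ be the standard Gaussian density on ℝ⁶ and let f = e^{u − K₀(u)}·(f₀⊗f₀) with E_{f₀⊗f₀}[e^{t u}] < ∞ for t in an open interval I ⊇ [0,1]. Then for every t ∈ I with t < 0 or t > 1, E_{f₀⊗f₀}[ ( ∫_{S²} (f∘A_x)/(f₀⊗f₀) σ(dx) )^t ] ≤ e^{K₀(tu) − t K₀(u)} < ∞, where σ is the uniform probability on S² and K₀(su) = log E_{f₀⊗f₀}[e^{su}]. -/
/-!
Jensen's inequality for `s ↦ s ^ t`, convex on `(0, ∞)` for `t ∉ (0, 1)`, bounds the `t`-th power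
of the `σ`-average of `e^{u∘A_x - K₀(u)}` by the `σ`-average of `e^{t (u∘A_x - K₀(u))}`. After
integrating against `f₀⊗f₀` and exchanging the integrals, each `A_x` can be removed: it is a linear
involution, so it preserves Lebesgue measure, and it preserves `|v|² + |w|²`, so it preserves the
Gaussian density. What remains is `E[e^{tu}] e^{-t K₀(u)} = e^{K₀(tu) - t K₀(u)}`.
-/

open MeasureTheory
open scoped RealInnerProductSpace

/-- The standard Gaussian measure `f₀⊗f₀ dx` on `ℝ³ × ℝ³`. -/
noncomputable def gauss6 :
    Measure (EuclideanSpace ℝ (Fin 3) × EuclideanSpace ℝ (Fin 3)) :=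
  (volume : Measure (EuclideanSpace ℝ (Fin 3) × EuclideanSpace ℝ (Fin 3))).withDensity
    (fun p => ENNReal.ofReal
      ((2 * Real.pi) ^ (-(3 : ℝ)) * Real.exp (-(‖p.1‖ ^ 2 + ‖p.2‖ ^ 2) / 2)))

/-- The collision map `A_x` on `ℝ³ × ℝ³` for a unit vector `x ∈ S²`. -/
noncomputable def collisionMap (x : Metric.sphere (0 : EuclideanSpace ℝ (Fin 3)) 1)
    (p : EuclideanSpace ℝ (Fin 3) × EuclideanSpace ℝ (Fin 3)) :
    EuclideanSpace ℝ (Fin 3) × EuclideanSpace ℝ (Fin 3) :=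
  (p.1 - ⟪(x : EuclideanSpace ℝ (Fin 3)), p.1 - p.2⟫ • (x : EuclideanSpace ℝ (Fin 3)),
   p.2 + ⟪(x : EuclideanSpace ℝ (Fin 3)), p.1 - p.2⟫ • (x : EuclideanSpace ℝ (Fin 3)))

open scoped ENNReal

namespace Real

theorem one_add_mul_sub_one_le_rpow {z t : ℝ} (hz : 0 < z) (ht : t ≤ 0 ∨ 1 ≤ t) :
    1 + t * (z - 1) ≤ z ^ t := by
  rcases ht with ht | ht
  · calc 1 + t * (z - 1) ≤ 1 + t * log z := by
          nlinarith [log_le_sub_one_of_pos hz]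
      _ ≤ exp (log z * t) := by linarith [add_one_le_exp (log z * t)]
      _ = z ^ t := (rpow_def_of_pos hz t).symm
  · simpa using one_add_mul_self_le_rpow_one_add (s := z - 1) (by linarith) ht

end Real

section Jensen

variable {α : Type*} [MeasurableSpace α] {μ : Measure α} [IsProbabilityMeasure μ] {t : ℝ}

/-- Jensen's inequality for `s ↦ s ^ t`, proved by integrating its tangent line at the mean:
for `t < 0` the map is convex only on the open half-line, out of reach of
`ConvexOn.map_integral_le`, which needs a closed domain. -/
theorem rpow_integral_le_integral_rpow {Y : α → ℝ} (hY : ∀ a, 0 < Y a) (hYi : Integrable Y μ)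
    (hYti : Integrable (fun a => Y a ^ t) μ) (ht : t ≤ 0 ∨ 1 ≤ t) :
    (∫ a, Y a ∂μ) ^ t ≤ ∫ a, Y a ^ t ∂μ := by
  set m := ∫ a, Y a ∂μ
  have hm : 0 < m := by
    rw [integral_pos_iff_support_of_nonneg (fun a => (hY a).le) hYi,
      Function.support_eq_univ fun a => (hY a).ne']
    simp
  have htangent : ∀ a, m ^ t + t * m ^ (t - 1) * (Y a - m) ≤ Y a ^ t := by
    intro a
    have h := Real.one_add_mul_sub_one_le_rpow (div_pos (hY a) hm) ht
    rw [Real.div_rpow (hY a).le hm.le, le_div_iff₀ (Real.rpow_pos_of_pos hm t)] at h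
    rw [Real.rpow_sub_one hm.ne']
    calc m ^ t + t * (m ^ t / m) * (Y a - m) = (1 + t * (Y a / m - 1)) * m ^ t := by
          field_simp
      _ ≤ Y a ^ t := h
  have hdev : Integrable (fun a => t * m ^ (t - 1) * (Y a - m)) μ :=
    (hYi.sub (integrable_const m)).const_mul _
  calc m ^ t = ∫ a, (m ^ t + t * m ^ (t - 1) * (Y a - m)) ∂μ := by
        rw [integral_add (integrable_const _) hdev, integral_const_mul,
          integral_sub hYi (integrable_const m)]
        simp [m]
    _ ≤ ∫ a, Y a ^ t ∂μ := integral_mono ((integrable_const _).add hdev) hYti htangent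

theorem ofReal_rpow_integral_exp_le_lintegral {v : α → ℝ} (hv : Measurable v)
    (ht : t < 0 ∨ 1 ≤ t) :
    ENNReal.ofReal ((∫ a, Real.exp (v a) ∂μ) ^ t) ≤
      ∫⁻ a, ENNReal.ofReal (Real.exp (t * v a)) ∂μ := by
  have hexp : ∀ a, Real.exp (v a) ^ t = Real.exp (t * v a) := fun a => by
    rw [← Real.exp_mul, mul_comm]
  by_cases hti : Integrable (fun a => Real.exp (t * v a)) μ
  swap
  · refine le_of_le_of_eq le_top (not_ne_iff.mp fun hfin => hti ?_)
    exact (lintegral_ofReal_ne_top_iff_integrable (hv.const_mul t).exp.aestronglyMeasurable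
      (.of_forall fun a => (Real.exp_pos _).le)).mp hfin.symm
  by_cases hi : Integrable (fun a => Real.exp (v a)) μ
  · rw [← ofReal_integral_eq_lintegral_ofReal hti (.of_forall fun a => (Real.exp_pos _).le)]
    refine ENNReal.ofReal_le_ofReal ?_
    simp_rw [← hexp]
    exact rpow_integral_le_integral_rpow (fun a => Real.exp_pos _) hi (by simpa [hexp])
      (ht.imp le_of_lt id)
  · -- a non-integrable function has Bochner integral `0`, and `0 ^ t = 0` as `t ≠ 0`
    rw [integral_undef hi, Real.zero_rpow (by rcases ht with h | h <;> linarith)]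
    simp

end Jensen

theorem MeasureTheory.MeasurePreserving.withDensity_of_comp_eq {α : Type*} [MeasurableSpace α]
    {μ : Measure α} {f : α → α} (hf : MeasurePreserving f μ μ) {g : α → ℝ≥0∞}
    (hg : Measurable g) (hgf : ∀ a, g (f a) = g a) :
    MeasurePreserving f (μ.withDensity g) (μ.withDensity g) := by
  refine ⟨hf.measurable, Measure.ext fun s hs => ?_⟩
  rw [Measure.map_apply hf.measurable hs, withDensity_apply _ (hf.measurable hs),
    withDensity_apply _ hs, ← hf.setLIntegral_comp_preimage hs hg]
  simp only [hgf]

theorem LinearMap.measurePreserving_of_involutive {E : Type*} [NormedAddCommGroup E]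
    [NormedSpace ℝ E] [MeasurableSpace E] [BorelSpace E] [FiniteDimensional ℝ E]
    (μ : Measure E) [μ.IsAddHaarMeasure] {L : E →ₗ[ℝ] E} (hL : Function.Involutive L) :
    MeasurePreserving L μ μ := by
  have hdet : LinearMap.det L * LinearMap.det L = 1 := by
    rw [← LinearMap.det_comp, show L.comp L = LinearMap.id from LinearMap.ext hL,
      LinearMap.det_id]
  have hne : LinearMap.det L ≠ 0 := left_ne_zero_of_mul_eq_one hdet
  refine ⟨L.continuous_of_finiteDimensional.measurable, ?_⟩
  rw [Measure.map_linearMap_addHaar_eq_smul_addHaar μ hne]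
  obtain h | h := mul_self_eq_one_iff.mp hdet <;> simp [h]

local notation "E3" => EuclideanSpace ℝ (Fin 3)

namespace CollisionMap

variable (x : Metric.sphere (0 : E3) 1)

noncomputable def toLinearMap : (E3 × E3) →ₗ[ℝ] (E3 × E3) where
  toFun := collisionMap x
  map_add' p q := by
    simp only [collisionMap, Prod.fst_add, Prod.snd_add, Prod.mk_add_mk, add_sub_add_comm,
      inner_add_right, add_smul]
    exact Prod.ext rfl (add_add_add_comm _ _ _ _)
  map_smul' c p := by
    simp only [collisionMap, Prod.smul_fst, Prod.smul_snd, ← smul_sub, real_inner_smul_right,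
      mul_smul]
    simp [smul_sub, smul_add]

theorem involutive : Function.Involutive (collisionMap x) := by
  intro p
  ext <;> simp [collisionMap, inner_sub_right, inner_add_right, real_inner_smul_right] <;> ring

theorem norm_sq_add_norm_sq (p : E3 × E3) :
    ‖(collisionMap x p).1‖ ^ 2 + ‖(collisionMap x p).2‖ ^ 2 = ‖p.1‖ ^ 2 + ‖p.2‖ ^ 2 := by
  simp only [collisionMap, norm_sub_sq_real, norm_add_sq_real, norm_smul, inner_sub_right,
    real_inner_smul_right, real_inner_comm (x : E3), Real.norm_eq_abs, norm_eq_of_mem_sphere,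
    mul_one, sq_abs]
  ring

theorem continuous_uncurry : Continuous (Function.uncurry collisionMap) := by
  unfold Function.uncurry collisionMap
  fun_prop

theorem measurePreserving_volume : MeasurePreserving (collisionMap x) volume volume :=
  have : (volume : Measure (E3 × E3)).IsAddHaarMeasure := Measure.prod.instIsAddHaarMeasure _ _
  (toLinearMap x).measurePreserving_of_involutive volume (involutive x)

end CollisionMap

theorem measurePreserving_collisionMap_gauss6 (x : Metric.sphere (0 : E3) 1) :
    MeasurePreserving (collisionMap x) gauss6 gauss6 :=
  (CollisionMap.measurePreserving_volume x).withDensity_of_comp_eq (by fun_prop)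
    fun p => by rw [CollisionMap.norm_sq_add_norm_sq]

instance : SFinite gauss6 := by
  unfold gauss6
  infer_instance

instance : NeZero gauss6 := ⟨fun h => by
  obtain ⟨p, hp⟩ := ((withDensity_eq_zero_iff (by fun_prop)).mp h).exists
  exact (ENNReal.ofReal_pos.mpr (by positivity)).ne' hp⟩

theorem lintegral_ofReal_exp_mul_sub {α : Type*} [MeasurableSpace α] {μ : Measure α} [NeZero μ]
    {u : α → ℝ} {s : ℝ} (hi : Integrable (fun a => Real.exp (s * u a)) μ) (c : ℝ) :
    ∫⁻ a, ENNReal.ofReal (Real.exp (s * (u a - c))) ∂μ =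
      ENNReal.ofReal (Real.exp (Real.log (∫ a, Real.exp (s * u a) ∂μ) - s * c)) := by
  have hsplit : ∀ a, ENNReal.ofReal (Real.exp (s * (u a - c))) =
      ENNReal.ofReal (Real.exp (s * u a)) * ENNReal.ofReal (Real.exp (-(s * c))) := fun a => by
    rw [← ENNReal.ofReal_mul (Real.exp_pos _).le, ← Real.exp_add, mul_sub, sub_eq_add_neg]
  simp_rw [hsplit]
  rw [lintegral_mul_const' _ _ ENNReal.ofReal_ne_top,
    ← ofReal_integral_eq_lintegral_ofReal hi (.of_forall fun a => (Real.exp_pos _).le),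
    ← ENNReal.ofReal_mul (integral_exp_pos hi).le, Real.exp_sub, Real.exp_log (integral_exp_pos hi),
    Real.exp_neg, div_eq_mul_inv]

theorem conditioning_preserves_maxexp_general
    (u : EuclideanSpace ℝ (Fin 3) × EuclideanSpace ℝ (Fin 3) → ℝ) (hu : Measurable u)
    (I : Set ℝ)
    (hint : ∀ t ∈ I, Integrable (fun p => Real.exp (t * u p)) gauss6)
    (K : ℝ → ℝ) (hK : ∀ s : ℝ, K s = Real.log (∫ p, Real.exp (s * u p) ∂gauss6))
    (σ : Measure (Metric.sphere (0 : EuclideanSpace ℝ (Fin 3)) 1)) [IsProbabilityMeasure σ]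
    (t : ℝ) (ht : t ∈ I) (ht' : t < 0 ∨ 1 < t) :
    ∫⁻ p, ENNReal.ofReal
        ((∫ x, Real.exp (u (collisionMap x p) - K 1) ∂σ) ^ t) ∂gauss6 ≤
      ENNReal.ofReal (Real.exp (K t - t * K 1)) := by
  have hv : Measurable fun q : Metric.sphere (0 : E3) 1 × (E3 × E3) =>
      u (collisionMap q.1 q.2) - K 1 :=
    (hu.comp CollisionMap.continuous_uncurry.measurable).sub_const _
  calc ∫⁻ p, ENNReal.ofReal ((∫ x, Real.exp (u (collisionMap x p) - K 1) ∂σ) ^ t) ∂gauss6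
      ≤ ∫⁻ p, ∫⁻ x, ENNReal.ofReal (Real.exp (t * (u (collisionMap x p) - K 1))) ∂σ ∂gauss6 :=
        lintegral_mono fun p => ofReal_rpow_integral_exp_le_lintegral
          (hv.comp measurable_prodMk_right) (ht'.imp id le_of_lt)
    _ = ∫⁻ x, ∫⁻ p, ENNReal.ofReal (Real.exp (t * (u (collisionMap x p) - K 1))) ∂gauss6 ∂σ :=
        lintegral_lintegral_swap
          ((hv.comp measurable_swap).const_mul t).exp.ennreal_ofReal.aemeasurable
    _ = ∫⁻ _ : Metric.sphere (0 : E3) 1,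
          ∫⁻ p, ENNReal.ofReal (Real.exp (t * (u p - K 1))) ∂gauss6 ∂σ :=
        lintegral_congr fun x => (measurePreserving_collisionMap_gauss6 x).lintegral_comp
          ((hu.sub_const _).const_mul t).exp.ennreal_ofReal
    _ = ENNReal.ofReal (Real.exp (K t - t * K 1)) := by
        rw [lintegral_const, measure_univ, mul_one, lintegral_ofReal_exp_mul_sub (hint t ht),
          ← hK]

/-- With `f = e^{u - K₀(u)}·(f₀⊗f₀)` and `K₀(su) = log E[e^{su}]`, the `t`-th moment of the
conditioned density `∫_{S²} (f∘A_x)/(f₀⊗f₀) σ(dx) = ∫_{S²} e^{u∘A_x - K₀(u)} σ(dx)` is bounded,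
for `t < 0` or `t > 1` in the interval of exponential integrability, by
`e^{K₀(tu) - t·K₀(u)}`; in particular it is finite. -/
theorem conditioning_preserves_maxexp
    (u : EuclideanSpace ℝ (Fin 3) × EuclideanSpace ℝ (Fin 3) → ℝ) (hu : Measurable u)
    (I : Set ℝ) (hIopen : IsOpen I) (hI01 : Set.Icc (0 : ℝ) 1 ⊆ I)
    (hint : ∀ t ∈ I, Integrable (fun p => Real.exp (t * u p)) gauss6)
    (K : ℝ → ℝ) (hK : ∀ s : ℝ, K s = Real.log (∫ p, Real.exp (s * u p) ∂gauss6))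
    (σ : Measure (Metric.sphere (0 : EuclideanSpace ℝ (Fin 3)) 1)) [IsProbabilityMeasure σ]
    (t : ℝ) (ht : t ∈ I) (ht' : t < 0 ∨ 1 < t) :
    ∫⁻ p, ENNReal.ofReal
        ((∫ x, Real.exp (u (collisionMap x p) - K 1) ∂σ) ^ t) ∂gauss6 ≤
      ENNReal.ofReal (Real.exp (K t - t * K 1)) :=
  conditioning_preserves_maxexp_general u hu I hint K hK σ t ht ht'
end
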